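/- arXiv:1203.6399 — 2 statements merged into one kernel-verified Lean document; each statement's English description precedes it below -/
import Mathlib

section
/- For all integers k, m ≥ 1, one has Σ_{j=1}^{max(k,m)} [q·C(k,j) + (-1)^j·C(m,j)] · Ẽ_{k+m-j+1}/(k+m-j+1) = q·(-1)^{m+1} / ((k+m+1)·C(k+m,k)) − [2]_q · Ẽ_{k+m+1}/(k+m+1), where C(n,j) denotes the binomial coefficient (equal to 0 when j > n). -/
/-!
Put `F n = Ẽ_{n+1} / (n+1)` and let `Λ` be the linear functional on `ℝ[X]` with `Λ (Xⁿ) = F n`.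
Since `C(n,i) / (i+1) = C(n+1,i+1) / (n+1)`, the recurrence for `Ẽ` says exactly that
`q Λ((X+1)ⁿ) + Λ(Xⁿ) = -q / (n+1)`, hence by linearity `q Λ(P(X+1)) + Λ(P) = -q ∫₀¹ P`
for every polynomial `P`. For `P = Xᵏ (X-1)ᵐ` the two terms on the left expand binomially into
the sum of the theorem (extended by its `j = 0` term `[2]_q F (k+m)`), and the right side is the
beta integral `-q (-1)ᵐ k! m! / (k+m+1)!`.
-/

open Finset Polynomial
open scoped Nat

noncomputable def umbral (F : ℕ → ℝ) : ℝ[X] →ₗ[ℝ] ℝ :=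
  lsum fun n => LinearMap.mulRight ℝ (F n)

section Umbral

variable (F : ℕ → ℝ)

@[simp]
lemma umbral_monomial (n : ℕ) (c : ℝ) : umbral F (monomial n c) = c * F n := by
  simp [umbral]

@[simp]
lemma umbral_C_mul_X_pow (n : ℕ) (c : ℝ) : umbral F (C c * X ^ n) = c * F n := by
  rw [C_mul_X_pow_eq_monomial, umbral_monomial]

lemma umbral_X_add_one_pow (n : ℕ) :
    umbral F ((X + 1) ^ n) = ∑ i ∈ range (n + 1), (n.choose i : ℝ) * F i := by
  rw [add_pow, map_sum]
  refine sum_congr rfl fun i _ => ?_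
  rw [one_pow, mul_one, ← map_natCast C, mul_comm, umbral_C_mul_X_pow]

lemma sum_range_choose_mul_of_le (f : ℕ → ℝ) {k n : ℕ} (h : k ≤ n) :
    ∑ j ∈ range (k + 1), (k.choose j : ℝ) * f j =
      ∑ j ∈ range (n + 1), (k.choose j : ℝ) * f j := by
  refine sum_subset (range_subset_range.2 (by omega)) fun j _ hj => ?_
  rw [Nat.choose_eq_zero_of_lt (by simpa using hj), Nat.cast_zero, zero_mul]

lemma umbral_X_add_one_pow_mul_X_pow (k m : ℕ) :
    umbral F ((X + 1) ^ k * X ^ m) =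
      ∑ j ∈ range (k + m + 1), (k.choose j : ℝ) * F (k + m - j) := by
  have hexpand : (X + 1) ^ k * X ^ m =
      ∑ j ∈ range (k + 1), C (k.choose j : ℝ) * X ^ (k + m - j) := by
    rw [add_comm, add_pow, sum_mul]
    refine sum_congr rfl fun j hj => ?_
    rw [show k + m - j = k - j + m by have := mem_range.1 hj; omega]
    simp only [one_pow, one_mul, pow_add, map_natCast]
    ring
  simp only [hexpand, map_sum, umbral_C_mul_X_pow]
  exact sum_range_choose_mul_of_le (fun j => F (k + m - j)) (Nat.le_add_right k m)

lemma umbral_X_pow_mul_X_sub_one_pow (k m : ℕ) :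
    umbral F (X ^ k * (X - 1) ^ m) =
      ∑ j ∈ range (k + m + 1), (-1) ^ j * (m.choose j : ℝ) * F (k + m - j) := by
  have hexpand : X ^ k * (X - 1) ^ m =
      ∑ j ∈ range (m + 1), C ((-1) ^ j * m.choose j : ℝ) * X ^ (k + m - j) := by
    rw [sub_eq_neg_add, add_pow, mul_sum]
    refine sum_congr rfl fun j hj => ?_
    rw [show k + m - j = k + (m - j) by have := mem_range.1 hj; omega]
    simp only [map_mul, map_pow, map_neg, map_one, map_natCast, pow_add]
    ring
  simp only [hexpand, map_sum, umbral_C_mul_X_pow, mul_comm ((-1 : ℝ) ^ _), mul_assoc]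
  exact sum_range_choose_mul_of_le (fun j => F (k + m - j) * (-1) ^ j) (Nat.le_add_left m k)

end Umbral

noncomputable def eulerDiv (E : ℕ → ℝ) (n : ℕ) : ℝ := E (n + 1) / (n + 1)

section EulerRecurrence

variable (q : ℝ) (E : ℕ → ℝ) (hE0 : E 0 = 1)
  (hE : ∀ n : ℕ, 1 ≤ n → q * ∑ j ∈ range (n + 1), (n.choose j : ℝ) * E j + E n = 0)
include hE0 hE

lemma sum_choose_mul_eulerDiv (n : ℕ) :
    q * ∑ i ∈ range (n + 1), (n.choose i : ℝ) * eulerDiv E i + eulerDiv E n = -q / (n + 1) := by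
  have hchoose (i : ℕ) :
      (n.choose i : ℝ) * eulerDiv E i = (n + 1).choose (i + 1) * E (i + 1) / (n + 1) := by
    have h : ((n + 1 : ℕ) * n.choose i : ℝ) = (n + 1).choose (i + 1) * (i + 1 : ℕ) := by
      exact_mod_cast Nat.add_one_mul_choose_eq n i
    push_cast at h
    rw [eulerDiv]
    field_simp
    linear_combination E (i + 1) * h
  have hrec := hE (n + 1) n.succ_pos
  rw [sum_range_succ', Nat.choose_zero_right, Nat.cast_one, one_mul, hE0] at hrec
  rw [sum_congr rfl fun i _ => hchoose i, ← sum_div, eulerDiv]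
  field_simp
  linear_combination hrec

lemma umbral_eulerDiv_comp_X_add_one (P : ℝ[X]) :
    q * umbral (eulerDiv E) (P.comp (X + 1)) + umbral (eulerDiv E) P =
      -q * ∫ x in (0 : ℝ)..1, P.eval x := by
  induction P using Polynomial.induction_on' with
  | add P Q hP hQ =>
    simp only [add_comp, map_add, eval_add]
    rw [intervalIntegral.integral_add (P.continuous.intervalIntegrable _ _)
      (Q.continuous.intervalIntegrable _ _)]
    linear_combination hP + hQ
  | monomial n c =>
    rw [← C_mul_X_pow_eq_monomial, mul_comp, C_comp, X_pow_comp, C_mul', map_smul,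
      umbral_X_add_one_pow, umbral_C_mul_X_pow, smul_eq_mul]
    simp only [eval_mul, eval_C, eval_pow, eval_X, intervalIntegral.integral_const_mul,
      integral_pow]
    linear_combination c * sum_choose_mul_eulerDiv q E hE0 hE n

end EulerRecurrence

lemma integral_pow_mul_sub_one_pow (k m : ℕ) :
    ∫ x in (0 : ℝ)..1, x ^ k * (x - 1) ^ m = (-1) ^ m * k ! * m ! / (k + m + 1)! := by
  induction m generalizing k with
  | zero =>
    simp [Nat.factorial_succ, field]
  | succ m ih =>
    have hsplit (x : ℝ) :
        x ^ k * (x - 1) ^ (m + 1) = x ^ (k + 1) * (x - 1) ^ m - x ^ k * (x - 1) ^ m := by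
      ring
    simp_rw [hsplit]
    rw [intervalIntegral.integral_sub (by apply Continuous.intervalIntegrable; fun_prop)
      (by apply Continuous.intervalIntegrable; fun_prop), ih, ih,
      show k + 1 + m + 1 = k + m + 1 + 1 by ring, show k + (m + 1) + 1 = k + m + 1 + 1 by ring]
    simp only [Nat.factorial_succ]
    push_cast
    field_simp
    ring

lemma factorial_mul_factorial_div_factorial (k m : ℕ) :
    (k ! * m ! / (k + m + 1)! : ℝ) = 1 / ((k + m + 1 : ℕ) * (k + m).choose k) := by
  rw [Nat.cast_add_choose, Nat.factorial_succ]
  push_cast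
  field_simp

lemma sum_Icc_one_max_eq (q : ℝ) (g : ℕ → ℝ) (k m : ℕ) :
    ∑ j ∈ Icc 1 (max k m), (q * (k.choose j : ℝ) + (-1) ^ j * (m.choose j : ℝ)) * g j =
      ∑ j ∈ range (k + m + 1), (q * (k.choose j : ℝ) + (-1) ^ j * (m.choose j : ℝ)) * g j
        - (q + 1) * g 0 := by
  have hvanish : ∀ j ∈ Icc 1 (k + m), j ∉ Icc 1 (max k m) →
      (q * (k.choose j : ℝ) + (-1) ^ j * (m.choose j : ℝ)) * g j = 0 := by
    intro j hj hj'
    simp only [mem_Icc] at hj hj'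
    rw [Nat.choose_eq_zero_of_lt (show k < j by omega),
      Nat.choose_eq_zero_of_lt (show m < j by omega)]
    simp
  rw [sum_subset (Icc_subset_Icc_right (by omega)) hvanish, range_eq_Ico,
    sum_eq_sum_Ico_succ_bot (by omega), Ico_add_one_right_eq_Icc]
  simp

theorem stmt_1_general (q : ℝ)
    (E : ℕ → ℝ) (hE0 : E 0 = 1)
    (hE : ∀ n : ℕ, 1 ≤ n →
      q * ∑ j ∈ range (n + 1), (n.choose j : ℝ) * E j + E n = 0)
    (k m : ℕ) :
    ∑ j ∈ Icc 1 (max k m),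
      (q * (k.choose j : ℝ) + (-1 : ℝ) ^ j * (m.choose j : ℝ)) *
        (E (k + m - j + 1) / (k + m - j + 1 : ℝ))
    = q * (-1 : ℝ) ^ (m + 1) / (((k + m + 1 : ℕ) : ℝ) * ((k + m).choose k : ℝ))
      - (1 + q) * (E (k + m + 1) / ((k + m + 1 : ℕ) : ℝ)) := by
  have hcomp : (X ^ k * (X - 1) ^ m : ℝ[X]).comp (X + 1) = (X + 1) ^ k * X ^ m := by simp
  have hfull := umbral_eulerDiv_comp_X_add_one q E hE0 hE (X ^ k * (X - 1) ^ m)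
  simp only [hcomp, eval_mul, eval_pow, eval_sub, eval_X, eval_one, umbral_X_add_one_pow_mul_X_pow,
    umbral_X_pow_mul_X_sub_one_pow, integral_pow_mul_sub_one_pow, mul_sum,
    ← sum_add_distrib] at hfull
  have hsum : ∑ j ∈ range (k + m + 1), (q * (k.choose j : ℝ) + (-1) ^ j * (m.choose j : ℝ)) *
      (E (k + m - j + 1) / (k + m - j + 1 : ℝ)) = -q * ((-1) ^ m * k ! * m ! / (k + m + 1)!) := by
    rw [← hfull]
    refine sum_congr rfl fun j hj => ?_
    rw [eulerDiv, Nat.cast_sub (by simpa [Nat.lt_succ_iff] using hj)]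
    push_cast
    ring
  rw [sum_Icc_one_max_eq, hsum, mul_assoc ((-1) ^ m : ℝ), mul_div_assoc,
    factorial_mul_factorial_div_factorial]
  push_cast [Nat.sub_zero]
  ring

theorem stmt_1 (q : ℝ) (hq0 : q ≠ 0) (hq1 : q ≠ -1)
    (E : ℕ → ℝ) (hE0 : E 0 = 1)
    (hE : ∀ n : ℕ, 1 ≤ n →
      q * ∑ j ∈ range (n + 1), (n.choose j : ℝ) * E j + E n = 0)
    (k m : ℕ) (hk : 1 ≤ k) (hm : 1 ≤ m) :
    ∑ j ∈ Icc 1 (max k m),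
      (q * (k.choose j : ℝ) + (-1 : ℝ) ^ j * (m.choose j : ℝ)) *
        (E (k + m - j + 1) / (k + m - j + 1 : ℝ))
    = q * (-1 : ℝ) ^ (m + 1) / (((k + m + 1 : ℕ) : ℝ) * ((k + m).choose k : ℝ))
      - (1 + q) * (E (k + m + 1) / ((k + m + 1 : ℕ) : ℝ)) :=
  stmt_1_general q E hE0 hE k m
end

section
/- For all integers k, m ≥ 1 and all x ∈ ℝ, one has Σ_{j=0}^{max(k,m)} (k+m−j)·[q·C(k,j) + (−1)^j·C(m,j)] · Ẽ_{k+m-j-1}(x) = [2]_q · x^{k−1}·(x−1)^{m−1}·((k+m)x − k), where C(n,j) denotes the binomial coefficient (equal to 0 when j > n). -/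
/-!
Let `L` be the linear functional on polynomials sending `X ^ n` to `Ẽ_n`, so that
`Ẽ_n(x) = L ((X + x) ^ n)`. The recursion for the `Ẽ_n` says exactly that
`q L (p(X + 1)) + L p = [2]_q p(0)` for every polynomial `p`. Expanding binomially, the left-hand
side of the identity is `L (g'(X + x))` with `g(y) = q (y + 1)^k y^m + y^k (y - 1)^m`, that is,
`g(y) = q h(y + 1) + h(y)` for `h(y) = y^k (y - 1)^m`. Applying the functional identity to
`h'(X + x)` gives `[2]_q h'(x) = [2]_q x^(k-1) (x - 1)^(m-1) ((k + m) x - k)`.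
-/

open Finset Polynomial

namespace QEuler

variable {R : Type*} [CommRing R]

noncomputable def functional (E : ℕ → R) : R[X] →ₗ[R] R :=
  lsum fun n => LinearMap.mulRight R (E n)

variable (E : ℕ → R)

theorem functional_monomial (n : ℕ) (a : R) : functional E (monomial n a) = a * E n := by
  simp [functional]

theorem functional_X_pow (n : ℕ) : functional E (X ^ n) = E n := by
  rw [← monomial_one_right_eq_X_pow, functional_monomial, one_mul]

theorem functional_C_mul (a : R) (p : R[X]) : functional E (C a * p) = a * functional E p := by
  rw [C_mul', map_smul, smul_eq_mul]

theorem functional_X_add_C_pow (x : R) (n : ℕ) :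
    functional E ((X + C x) ^ n) =
      ∑ l ∈ range (n + 1), (n.choose l : R) * E (n - l) * x ^ l := by
  rw [add_comm, add_pow, map_sum]
  refine sum_congr rfl fun l _ => ?_
  rw [← C_pow, ← Polynomial.C_eq_natCast, mul_comm, ← mul_assoc, ← C_mul, functional_C_mul,
    functional_X_pow]
  ring

theorem functional_X_add_one_pow (n : ℕ) :
    functional E ((X + 1) ^ n) = ∑ j ∈ range (n + 1), (n.choose j : R) * E j := by
  rw [add_pow, map_sum]
  refine sum_congr rfl fun j _ => ?_
  rw [one_pow, mul_one, ← Polynomial.C_eq_natCast, mul_comm, functional_C_mul, functional_X_pow]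

theorem functional_comp_X_add_one {q : R} (hE0 : E 0 = 1)
    (hE : ∀ n : ℕ, 1 ≤ n → q * ∑ j ∈ range (n + 1), (n.choose j : R) * E j + E n = 0)
    (p : R[X]) :
    q * functional E (p.comp (X + 1)) + functional E p = (1 + q) * p.eval 0 := by
  induction p using Polynomial.induction_on' with
  | add p r hp hr => simp only [add_comp, map_add, eval_add]; linear_combination hp + hr
  | monomial n a =>
    rw [← C_mul_X_pow_eq_monomial, mul_comp, C_comp, X_pow_comp, functional_C_mul,
      functional_C_mul, functional_X_pow, functional_X_add_one_pow, eval_C_mul, eval_pow, eval_X,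
      zero_pow_eq]
    rcases Nat.eq_zero_or_pos n with rfl | hn
    · rw [if_pos rfl]
      simp only [zero_add, range_one, sum_singleton, Nat.choose_self, Nat.cast_one, one_mul, hE0]
      ring
    · rw [if_neg hn.ne']
      linear_combination a * hE n hn

end QEuler

section

variable {R : Type*} [CommRing R]

theorem pow_mul_add_pow_eq_sum (a y : R) (m : ℕ) {k N : ℕ} (hk : k ≤ N) :
    y ^ m * (a + y) ^ k = ∑ j ∈ range (N + 1), a ^ j * (k.choose j : R) * y ^ (k + m - j) := by
  have hvanish : ∀ j ∈ range (N + 1), j ∉ range (k + 1) →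
      a ^ j * (k.choose j : R) * y ^ (k + m - j) = 0 := fun j _ hj => by
    rw [Nat.choose_eq_zero_of_lt (by simp at hj; omega), Nat.cast_zero, mul_zero, zero_mul]
  rw [← sum_subset (range_subset_range.mpr (by omega)) hvanish, add_pow, mul_sum]
  refine sum_congr rfl fun j hj => ?_
  have : k + m - j = (k - j) + m := by simp at hj; omega
  rw [this, pow_add]
  ring

theorem sum_choose_add_neg_one_pow_choose_mul_pow (q y : R) (k m : ℕ) :
    ∑ j ∈ range (max k m + 1), (q * (k.choose j : R) + (-1) ^ j * (m.choose j : R)) *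
        y ^ (k + m - j) =
      q * (y ^ m * (1 + y) ^ k) + y ^ k * (-1 + y) ^ m := by
  rw [pow_mul_add_pow_eq_sum 1 y m (le_max_left k m),
    pow_mul_add_pow_eq_sum (-1) y k (le_max_right k m), mul_sum, ← sum_add_distrib]
  refine sum_congr rfl fun j _ => ?_
  rw [add_comm m k]
  ring

theorem eval_zero_derivative_X_add_C_pow_mul (x : R) {k m : ℕ} (hk : 1 ≤ k) (hm : 1 ≤ m) :
    (derivative ((X + C x) ^ k * (X + C (x - 1)) ^ m)).eval 0 =
      x ^ (k - 1) * (x - 1) ^ (m - 1) * (((k + m : ℕ) : R) * x - k) := by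
  obtain ⟨k, rfl⟩ := Nat.exists_eq_add_of_le' hk
  obtain ⟨m, rfl⟩ := Nat.exists_eq_add_of_le' hm
  simp only [derivative_mul, derivative_X_add_C_pow, eval_add, eval_mul, eval_C, eval_pow,
    eval_X, zero_add, Nat.add_sub_cancel]
  push_cast
  ring

end

open QEuler in
theorem stmt_7_general (q : ℝ)
    (E : ℕ → ℝ) (hE0 : E 0 = 1)
    (hE : ∀ n : ℕ, 1 ≤ n →
      q * ∑ j ∈ range (n + 1), (n.choose j : ℝ) * E j + E n = 0)
    (Ep : ℕ → ℝ → ℝ)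
    (hEp : ∀ (n : ℕ) (x : ℝ),
      Ep n x = ∑ l ∈ range (n + 1), (n.choose l : ℝ) * E (n - l) * x ^ l)
    (k m : ℕ) (hk : 1 ≤ k) (hm : 1 ≤ m) (x : ℝ) :
    ∑ j ∈ range (max k m + 1),
      ((k + m - j : ℕ) : ℝ) *
        (q * (k.choose j : ℝ) + (-1 : ℝ) ^ j * (m.choose j : ℝ)) * Ep (k + m - j - 1) x
    = (1 + q) * x ^ (k - 1) * (x - 1) ^ (m - 1) * (((k + m : ℕ) : ℝ) * x - (k : ℝ)) := by
  set c : ℕ → ℝ := fun j => q * (k.choose j : ℝ) + (-1 : ℝ) ^ j * (m.choose j : ℝ)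
  set P : ℝ[X] := (X + C x) ^ k * (X + C (x - 1)) ^ m
  have hEp' : ∀ n, Ep n x = functional E ((X + C x) ^ n) := fun n => by
    rw [hEp, functional_X_add_C_pow]
  have hP : ∑ j ∈ range (max k m + 1), C (c j) * (X + C x) ^ (k + m - j) =
      C q * P.comp (X + 1) + P := by
    have := sum_choose_add_neg_one_pow_choose_mul_pow (C q) (X + C x) k m
    simp only [P, c, map_add, map_mul, map_pow, map_neg, map_one, map_natCast, mul_comp, pow_comp,
      add_comp, X_comp, C_comp, this]
    rw [C_sub, C_1]
    ring
  calc _ = ∑ j ∈ range (max k m + 1),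
          c j * functional E (derivative ((X + C x) ^ (k + m - j))) :=
        sum_congr rfl fun j _ => by rw [derivative_X_add_C_pow, functional_C_mul, hEp']; ring
    _ = functional E (derivative (C q * P.comp (X + 1) + P)) := by
        simp only [← hP, derivative_C_mul, map_sum, functional_C_mul]
    _ = q * functional E ((derivative P).comp (X + 1)) + functional E (derivative P) := by
        simp only [derivative_C_mul, derivative_comp, derivative_X, derivative_one, add_zero,
          one_mul, map_add, functional_C_mul]
    _ = (1 + q) * (derivative P).eval 0 := functional_comp_X_add_one E hE0 hE _
    _ = _ := by rw [eval_zero_derivative_X_add_C_pow_mul x hk hm]; ring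

theorem stmt_7 (q : ℝ) (hq0 : q ≠ 0) (hq1 : q ≠ -1)
    (E : ℕ → ℝ) (hE0 : E 0 = 1)
    (hE : ∀ n : ℕ, 1 ≤ n →
      q * ∑ j ∈ range (n + 1), (n.choose j : ℝ) * E j + E n = 0)
    (Ep : ℕ → ℝ → ℝ)
    (hEp : ∀ (n : ℕ) (x : ℝ),
      Ep n x = ∑ l ∈ range (n + 1), (n.choose l : ℝ) * E (n - l) * x ^ l)
    (k m : ℕ) (hk : 1 ≤ k) (hm : 1 ≤ m) (x : ℝ) :
    ∑ j ∈ range (max k m + 1),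
      ((k + m - j : ℕ) : ℝ) *
        (q * (k.choose j : ℝ) + (-1 : ℝ) ^ j * (m.choose j : ℝ)) * Ep (k + m - j - 1) x
    = (1 + q) * x ^ (k - 1) * (x - 1) ^ (m - 1) * (((k + m : ℕ) : ℝ) * x - (k : ℝ)) :=
  stmt_7_general q E hE0 hE Ep hEp k m hk hm x
end
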